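/- arXiv:math/0701919 — 6 statements merged into one kernel-verified Lean document; each statement's English description precedes it below -/
import Mathlib

section
/- Let K be an algebraically closed field and P ∈ K[x_1,...,x_n] a polynomial of the form P = h(m1, m2), where h ∈ K[u,v] is homogeneous of degree d ≥ 2 and m1, m2 are monomials with deg(P) > max(deg m1, deg m2). Then for every k with 0 ≤ k ≤ d, the polynomial P(x) + λ·m1^k·m2^{d−k} is reducible in the polynomial ring over the algebraic closure of K(λ), where λ is an indeterminate. -/
open MvPolynomial

/-- Units in a multivariate polynomial ring over a domain have total degree zero. -/
lemma aux_isUnit_totalDegree {L : Type*} [CommRing L] [IsDomain L] :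
    ∀ {n : ℕ} (q : MvPolynomial (Fin n) L), IsUnit q → q.totalDegree = 0 := by
  intro n
  induction n with
  | zero =>
    intro q _
    rw [totalDegree_eq_zero_iff]
    intro m _ x
    exact x.elim0
  | succ n ih =>
    intro q hq
    obtain ⟨r, hr, hCr⟩ := Polynomial.isUnit_iff.mp (hq.map (finSuccEquiv L n))
    have hr0 := ih r hr
    rw [MvPolynomial.totalDegree]
    apply Nat.le_antisymm _ (Nat.zero_le _)
    apply Finset.sup_le
    intro m hm
    have h1 : Finsupp.tail m ∈ ((finSuccEquiv L n q).coeff (m 0)).support := by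
      rw [mem_support_coeff_finSuccEquiv, Finsupp.cons_tail]
      exact hm
    rw [← hCr, Polynomial.coeff_C] at h1
    by_cases h0 : m 0 = 0
    · rw [if_pos h0] at h1
      have : (Finsupp.tail m).sum (fun _ e => e) ≤ 0 := hr0 ▸ le_totalDegree h1
      have hmc : m = Finsupp.cons (m 0) (Finsupp.tail m) := (Finsupp.cons_tail m).symm
      rw [hmc, Finsupp.sum_cons, h0, zero_add]
      exact this
    · rw [if_neg h0] at h1
      simp at h1

/-- If a product `u * S.prod` with `u` a unit and all factors of degree `≤ D` is
irreducible, then it has total degree `≤ D`. -/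
lemma aux_irred_deg_le {L : Type*} [Field L] {n : ℕ} (D : ℕ) :
    ∀ (S : Multiset (MvPolynomial (Fin n) L)) (u : MvPolynomial (Fin n) L),
      IsUnit u → (∀ F ∈ S, F.totalDegree ≤ D) → Irreducible (u * S.prod) →
      (u * S.prod).totalDegree ≤ D := by
  intro S
  induction S using Multiset.induction with
  | empty =>
    intro u hu _ hirr
    rw [Multiset.prod_zero, mul_one] at hirr
    exact (hirr.not_isUnit hu).elim
  | cons F S' ih =>
    intro u hu hS hirr
    rw [Multiset.prod_cons, ← mul_assoc] at hirr ⊢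
    rcases hirr.isUnit_or_isUnit rfl with h1 | h1
    · exact ih (u * F) h1 (fun G hG => hS G (Multiset.mem_cons_of_mem hG)) hirr
    · calc ((u * F) * S'.prod).totalDegree
          ≤ (u * F).totalDegree + S'.prod.totalDegree := totalDegree_mul _ _
        _ ≤ (u.totalDegree + F.totalDegree) + S'.prod.totalDegree :=
            Nat.add_le_add_right (totalDegree_mul _ _) _
        _ ≤ D := by
            rw [aux_isUnit_totalDegree u hu, aux_isUnit_totalDegree S'.prod h1, zero_add,
              add_zero]
            exact hS F (Multiset.mem_cons_self F S')

/-- Evaluating a homogeneous polynomial at a scaled point. -/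
lemma aux_eval₂_smul {R S : Type*} [CommSemiring R] [CommSemiring S] (f : R →+* S)
    {m d : ℕ} {H : MvPolynomial (Fin m) R} (hH : H.IsHomogeneous d) (g : Fin m → S) (r : S) :
    eval₂ f (fun i => r * g i) H = r ^ d * eval₂ f g H := by
  rw [eval₂_eq, eval₂_eq, Finset.mul_sum]
  apply Finset.sum_congr rfl
  intro m hm
  have hdeg : ∑ i ∈ m.support, m i = d := by
    have := hH (mem_support_iff.mp hm)
    simpa [Finsupp.weight, Finsupp.linearCombination, Finsupp.sum] using this
  rw [← hdeg]
  simp only [mul_pow, Finset.prod_mul_distrib, Finset.prod_pow_eq_pow_sum]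
  ring

/-- Every binary form of degree `d` factors into `C c` times a power of `X 1`
times linear factors. -/
lemma aux_binary_factor {L : Type*} [Field L] [IsAlgClosed L] {d : ℕ}
    (H : MvPolynomial (Fin 2) L) (hH : H.IsHomogeneous d) :
    ∃ (c : L) (R : Multiset L), R.card ≤ d ∧
      H = C c * (X 1) ^ (d - R.card) *
        (R.map (fun r => (X 0 : MvPolynomial (Fin 2) L) - C r * X 1)).prod := by
  classical
  set p : Polynomial L := MvPolynomial.aeval ![Polynomial.X, 1] H with hp
  have hple : p.natDegree ≤ d := by
    rw [hp]
    conv_lhs => rw [as_sum H]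
    rw [map_sum]
    apply Polynomial.natDegree_sum_le_of_forall_le
    intro m hm
    have hdeg : ∑ i ∈ m.support, m i = d := by
      have := hH (mem_support_iff.mp hm)
      simpa [Finsupp.weight, Finsupp.linearCombination, Finsupp.sum] using this
    rw [aeval_monomial]
    refine le_trans (Polynomial.natDegree_mul_le) ?_
    rw [Polynomial.algebraMap_eq, Polynomial.natDegree_C, zero_add]
    refine le_trans (Polynomial.natDegree_prod_le _ _) ?_
    rw [← hdeg]
    apply Finset.sum_le_sum
    intro i _
    fin_cases i <;> simp
  set F := FractionRing (MvPolynomial (Fin 2) L)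
  set ψ : MvPolynomial (Fin 2) L →+* F := algebraMap _ F with hψ
  have hinj : Function.Injective ψ := IsFractionRing.injective _ _
  set f : L →+* F := ψ.comp (C : L →+* MvPolynomial (Fin 2) L) with hf
  set u := ψ (X 0) with hu
  set v := ψ (X 1) with hv'
  have hv : v ≠ 0 := by
    intro h
    exact (X_ne_zero (R := L) 1) (hinj (by simpa using h))
  set t : F := u / v with ht
  have h1 : ψ H = eval₂ f ![u, v] H := by
    have : ψ = (eval₂Hom f ![u, v] : MvPolynomial (Fin 2) L →+* F) := by
      apply MvPolynomial.ringHom_ext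
      · intro r; simp [hf]
      · intro i; fin_cases i <;> simp [hu, hv']
    rw [this]
    rfl
  have h2 : eval₂ f ![u, v] H = v ^ d * eval₂ f ![t, 1] H := by
    rw [← aux_eval₂_smul f hH ![t, 1] v]
    congr 1
    funext i
    fin_cases i
    · simp [ht, mul_comm v, div_mul_cancel₀ _ hv]
    · simp
  have h3 : eval₂ f ![t, 1] H = p.eval₂ f t := by
    have hext : (eval₂Hom f ![t, (1 : F)]) =
        (Polynomial.eval₂RingHom f t).comp
          ((MvPolynomial.aeval ![Polynomial.X, (1 : Polynomial L)] :
            MvPolynomial (Fin 2) L →ₐ[L] Polynomial L) : MvPolynomial (Fin 2) L →+* Polynomial L) := by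
      apply MvPolynomial.ringHom_ext
      · intro r; simp
      · intro i; fin_cases i <;> simp
    have := DFunLike.congr_fun hext H
    simpa [hp] using this
  have hsplits : p.roots.card = p.natDegree :=
    (Polynomial.splits_iff_card_roots).mp (IsAlgClosed.splits p)
  have hsplit : Polynomial.C p.leadingCoeff *
      (p.roots.map fun a => Polynomial.X - Polynomial.C a).prod = p :=
    Polynomial.C_leadingCoeff_mul_prod_multiset_X_sub_C hsplits
  set c := p.leadingCoeff with hc
  set e := p.roots.card with he
  have hed : e ≤ d := hsplits ▸ hple
  refine ⟨c, p.roots, hed, ?_⟩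
  apply hinj
  rw [h1, h2, h3]
  have h4 : p.eval₂ f t = f c * (p.roots.map (fun a => t - f a)).prod := by
    conv_lhs => rw [← hsplit]
    have : ∀ q : Polynomial L, q.eval₂ f t = Polynomial.eval₂RingHom f t q := fun _ => rfl
    rw [this, map_mul, map_multiset_prod, Multiset.map_map]
    congr 1
    · simp
    · congr 1
      apply Multiset.map_congr rfl
      intro a _
      simp
  rw [h4]
  -- RHS: push ψ through
  rw [map_mul, map_mul, map_pow, map_multiset_prod, Multiset.map_map]
  have hψC : ∀ a : L, ψ (C a) = f a := fun a => rfl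
  have hrhsmap : (p.roots.map (ψ ∘ fun r => (X 0 : MvPolynomial (Fin 2) L) - C r * X 1)) =
      p.roots.map (fun a => u - f a * v) := by
    apply Multiset.map_congr rfl
    intro a _
    simp [hu, hv', hψC, map_sub, map_mul]
  rw [hrhsmap, hψC]
  -- now pure field computation
  have hve : v ^ e = (p.roots.map (fun _ => v)).prod := by
    rw [Multiset.map_const', Multiset.prod_replicate, he]
  have hcomb : (p.roots.map (fun a => t - f a)).prod * v ^ e =
      (p.roots.map (fun a => u - f a * v)).prod := by
    rw [hve, ← Multiset.prod_map_mul]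
    apply congr_arg
    apply Multiset.map_congr rfl
    intro a _
    rw [sub_mul, ht, div_mul_cancel₀ _ hv]
  rw [← hcomb, ← he,
    show v ^ d = v ^ (d - e) * v ^ e by rw [← pow_add, Nat.sub_add_cancel hed]]
  ring

/-- If `P = h(m1, m2)` with `h` homogeneous of degree `d ≥ 2` and
`m1, m2` monomials with `deg P > max(deg m1, deg m2)`, then for each `0 ≤ k ≤ d`
the polynomial `P + λ ⬝ m1^k m2^{d-k}` is reducible over the algebraic closure
of `K(λ)`. -/
theorem homogeneous_in_monomials_reducibility
    {K : Type*} [Field K] [IsAlgClosed K] {n : ℕ}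
    (a b : Fin n →₀ ℕ)
    (m1 m2 : MvPolynomial (Fin n) K)
    (hm1 : m1 = monomial a (1 : K)) (hm2 : m2 = monomial b (1 : K))
    (h : MvPolynomial (Fin 2) K) (d : ℕ) (hd : 2 ≤ d)
    (hhom : h.IsHomogeneous d)
    (P : MvPolynomial (Fin n) K)
    (hP : P = MvPolynomial.aeval ![m1, m2] h)
    (hdeg : max m1.totalDegree m2.totalDegree < P.totalDegree)
    (k : ℕ) (hk : k ≤ d) :
    ¬ Irreducible
        (MvPolynomial.map
            ((algebraMap (RatFunc K) (AlgebraicClosure (RatFunc K))).comp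
              (algebraMap K (RatFunc K))) P +
          C (algebraMap (RatFunc K) (AlgebraicClosure (RatFunc K)) RatFunc.X) *
            MvPolynomial.map
              ((algebraMap (RatFunc K) (AlgebraicClosure (RatFunc K))).comp
                (algebraMap K (RatFunc K))) (m1 ^ k * m2 ^ (d - k))) := by
  intro hirr
  set Cl := AlgebraicClosure (RatFunc K) with hCl
  set φ : K →+* Cl :=
    (algebraMap (RatFunc K) Cl).comp (algebraMap K (RatFunc K)) with hφ
  set lam : Cl := algebraMap (RatFunc K) Cl RatFunc.X with hlam
  set Q : MvPolynomial (Fin n) Cl :=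
    MvPolynomial.map φ P + C lam * MvPolynomial.map φ (m1 ^ k * m2 ^ (d - k)) with hQ
  have hφinj : Function.Injective φ := φ.injective
  set m0 : Fin n →₀ ℕ := k • a + (d - k) • b with hm0
  have hmono : m1 ^ k * m2 ^ (d - k) = monomial m0 (1 : K) := by
    rw [hm1, hm2, monomial_pow, monomial_pow, monomial_mul, one_pow, one_pow, one_mul]
  -- coefficients of Q
  have hcoeffQ : ∀ m, coeff m Q = φ (coeff m P) + (if m0 = m then lam else 0) := by
    intro m
    rw [hQ, hmono, coeff_add, coeff_map, map_monomial, map_one, C_mul_monomial, mul_one,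
      coeff_monomial]
  have hne : ∀ m, coeff m P ≠ 0 → coeff m Q ≠ 0 := by
    intro m hm
    rw [hcoeffQ]
    by_cases h0 : m0 = m
    · rw [if_pos h0]
      intro hcontra
      have h2 : algebraMap (RatFunc K) Cl (algebraMap K (RatFunc K) (coeff m P) + RatFunc.X)
          = 0 := by
        rw [map_add]; exact hcontra
      have h3 : algebraMap K (RatFunc K) (coeff m P) + RatFunc.X = 0 :=
        (algebraMap (RatFunc K) Cl).injective (by rw [h2, map_zero])
      have h4 : algebraMap (Polynomial K) (RatFunc K) (Polynomial.X + Polynomial.C (coeff m P))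
          = 0 := by
        rw [map_add, RatFunc.algebraMap_C, RatFunc.algebraMap_X, ← RatFunc.algebraMap_eq_C]
        rw [add_comm] at h3
        exact h3
      exact Polynomial.X_add_C_ne_zero (coeff m P)
        (RatFunc.algebraMap_injective K (by rw [h4, map_zero]))
    · rw [if_neg h0, add_zero]
      intro hcontra
      exact hm (hφinj (by rw [hcontra, map_zero]))
  have hsub : P.support ⊆ Q.support := fun m hm =>
    mem_support_iff.mpr (hne m (mem_support_iff.mp hm))
  have hdegPQ : P.totalDegree ≤ Q.totalDegree := Finset.sup_mono hsub
  have hdegQ : max m1.totalDegree m2.totalDegree < Q.totalDegree := lt_of_lt_of_le hdeg hdegPQ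
  -- Q as a binary form in the monomials
  set M1 : MvPolynomial (Fin n) Cl := MvPolynomial.map φ m1 with hM1
  set M2 : MvPolynomial (Fin n) Cl := MvPolynomial.map φ m2 with hM2
  set H : MvPolynomial (Fin 2) Cl :=
    MvPolynomial.map φ h + C lam * (X 0) ^ k * (X 1) ^ (d - k) with hH
  have hHhom : H.IsHomogeneous d := by
    apply (hhom.map φ).add
    have := ((isHomogeneous_C (Fin 2) lam).mul ((isHomogeneous_X Cl 0).pow k)).mul
      ((isHomogeneous_X Cl 1).pow (d - k))
    simpa [Nat.add_sub_cancel' hk] using this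
  have hcomm : (MvPolynomial.map φ).comp
      ((aeval ![m1, m2] : MvPolynomial (Fin 2) K →ₐ[K] MvPolynomial (Fin n) K) :
        MvPolynomial (Fin 2) K →+* MvPolynomial (Fin n) K) =
      ((aeval ![M1, M2] : MvPolynomial (Fin 2) Cl →ₐ[Cl] MvPolynomial (Fin n) Cl) :
        MvPolynomial (Fin 2) Cl →+* MvPolynomial (Fin n) Cl).comp (MvPolynomial.map φ) := by
    apply MvPolynomial.ringHom_ext
    · intro r
      simp [algebraMap_eq]
    · intro i
      fin_cases i <;> simp [hM1, hM2]
  have hmapaeval : MvPolynomial.map φ (aeval ![m1, m2] h) =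
      aeval ![M1, M2] (MvPolynomial.map φ h) := DFunLike.congr_fun hcomm h
  have hQH : Q = aeval ![M1, M2] H := by
    rw [hQ, hH, map_add, ← hmapaeval, ← hP]
    refine congrArg₂ (· + ·) rfl ?_
    simp only [map_mul, map_pow, aeval_X, aeval_C, algebraMap_eq, Matrix.cons_val_zero,
      Matrix.cons_val_one, Matrix.head_cons]
    ring
  obtain ⟨c, R, hRcard, hHfact⟩ := aux_binary_factor H hHhom
  have haevalC : ∀ x : Cl, aeval ![M1, M2] (C x : MvPolynomial (Fin 2) Cl) = C x := by
    intro x; rw [aeval_C, algebraMap_eq]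
  have h5 : (aeval ![M1, M2]) (X 1 : MvPolynomial (Fin 2) Cl) = M2 := by simp
  have h6 : R.map ((aeval ![M1, M2]) ∘ fun r => (X 0 : MvPolynomial (Fin 2) Cl) - C r * X 1) =
      R.map (fun r => M1 - C r * M2) := by
    apply Multiset.map_congr rfl
    intro r _
    simp [haevalC]
  have hQfact : Q = C c * (M2 ^ (d - R.card) *
      (R.map (fun r => M1 - C r * M2)).prod) := by
    rw [hQH, hHfact, map_mul, map_mul, map_pow, map_multiset_prod, Multiset.map_map,
      haevalC, h5, h6, mul_assoc]
  set S : Multiset (MvPolynomial (Fin n) Cl) :=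
    Multiset.replicate (d - R.card) M2 + R.map (fun r => M1 - C r * M2) with hS
  have hQS : Q = C c * S.prod := by
    rw [hQfact, hS, Multiset.prod_add, Multiset.prod_replicate]
  set D := max m1.totalDegree m2.totalDegree with hD
  have hm1deg : m1.totalDegree = a.sum fun _ e => e := by
    rw [hm1, totalDegree_monomial _ one_ne_zero]
  have hm2deg : m2.totalDegree = b.sum fun _ e => e := by
    rw [hm2, totalDegree_monomial _ one_ne_zero]
  have hM2deg : M2.totalDegree ≤ D := by
    rw [hM2, hm2, map_monomial, map_one]
    refine le_trans (totalDegree_monomial_le _ _) ?_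
    have : (b.sum fun _ e => e) ≤ D := by rw [← hm2deg, hD]; exact le_max_right _ _
    exact this
  have hdegS : ∀ F ∈ S, F.totalDegree ≤ D := by
    intro F hF
    rcases Multiset.mem_add.mp hF with hmem | hmem
    · rw [Multiset.eq_of_mem_replicate hmem]
      exact hM2deg
    · obtain ⟨r, _, rfl⟩ := Multiset.mem_map.mp hmem
      have hsplit : M1 - C r * M2 = M1 + (-1 : Cl) • (C r * M2) := by
        rw [neg_one_smul, ← sub_eq_add_neg]
      rw [hsplit]
      refine le_trans (totalDegree_add _ _) (max_le ?_ ?_)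
      · rw [hM1, hm1, map_monomial, map_one]
        refine le_trans (totalDegree_monomial_le _ _) ?_
        have : (a.sum fun _ e => e) ≤ D := by rw [← hm1deg, hD]; exact le_max_left _ _
        exact this
      · refine le_trans (totalDegree_smul_le _ _) ?_
        rw [hM2, hm2, map_monomial, map_one, C_mul_monomial, mul_one]
        refine le_trans (totalDegree_monomial_le _ _) ?_
        have : (b.sum fun _ e => e) ≤ D := by rw [← hm2deg, hD]; exact le_max_right _ _
        exact this
  by_cases hc : c = 0
  · rw [hc, map_zero, zero_mul] at hQS
    rw [hQS, totalDegree_zero] at hdegQ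
    exact Nat.not_lt_zero _ hdegQ
  · have hu : IsUnit (C c : MvPolynomial (Fin n) Cl) :=
      (IsUnit.mk0 c hc).map (C : Cl →+* MvPolynomial (Fin n) Cl)
    rw [hQS] at hirr
    have hfin := aux_irred_deg_le D S (C c) hu hdegS hirr
    rw [← hQS] at hfin
    exact absurd hdegQ (not_lt.mpr hfin)
end

section
/- Let K be an algebraically closed field, n ≥ 2, and consider the polynomial P(x,y) = y·(x+y)·(y^2 + x·y − 2x) ∈ K[x,y] (characteristic of K not 2). Then P admits two homogeneous decompositions: P = h1(φ1, ψ1) with h1(u,v) = v^2 − u^2, φ1 = x, ψ1 = (y−1)(x+y) + y, and P = h2(φ2, ψ2) with h2(u,v) = u·v, φ2 = y, ψ2 = (x+y)(y^2 + x·y − 2x); and there is no L ∈ GL_2(K) with (φ1, ψ1) = L(φ2, ψ2). -/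
open MvPolynomial

/-- The polynomial `P = y(x+y)(y²+xy−2x)` admits two homogeneous
decompositions `P = ψ₁² − φ₁²` (i.e. `h₁(u,v) = v² − u²`) with `φ₁ = x`,
`ψ₁ = (y−1)(x+y)+y`, and `P = φ₂·ψ₂` (i.e. `h₂(u,v) = uv`) with `φ₂ = y`,
`ψ₂ = (x+y)(y²+xy−2x)`, and no `L ∈ GL₂(K)` sends `(φ₂,ψ₂)` to `(φ₁,ψ₁)`. -/
theorem counterexample_uniqueness_ell_zero
    {K : Type*} [Field K] [IsAlgClosed K] (hchar : (2 : K) ≠ 0)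
    (x y P φ₁ ψ₁ φ₂ ψ₂ : MvPolynomial (Fin 2) K)
    (hx : x = X 0) (hy : y = X 1)
    (hP : P = y * (x + y) * (y ^ 2 + x * y - 2 * x))
    (hφ₁ : φ₁ = x) (hψ₁ : ψ₁ = (y - 1) * (x + y) + y)
    (hφ₂ : φ₂ = y) (hψ₂ : ψ₂ = (x + y) * (y ^ 2 + x * y - 2 * x)) :
    P = ψ₁ ^ 2 - φ₁ ^ 2 ∧ P = φ₂ * ψ₂ ∧
      ¬ ∃ a b c d : K, a * d - b * c ≠ 0 ∧
          φ₁ = C a * φ₂ + C b * ψ₂ ∧ ψ₁ = C c * φ₂ + C d * ψ₂ := by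
  subst hx hy hP hφ₁ hψ₁ hφ₂ hψ₂
  refine ⟨by ring, by ring, ?_⟩
  rintro ⟨a, b, c, d, hdet, h1, h2⟩
  have e1 := congrArg (eval ![(1 : K), 0]) h1
  have e2 := congrArg (eval ![(-1 : K), 0]) h1
  simp [Matrix.cons_val_zero, Matrix.cons_val_one, Matrix.head_cons] at e1 e2
  exact hchar (by linear_combination e1 + e2)
end

section
/- Let K be an algebraically closed field, λ1,...,λℓ independent indeterminates (ℓ ≥ 1), and P, Q1, ..., Qℓ ∈ K[x_1,...,x_n] relatively prime nonzero polynomials. If a nonconstant polynomial a ∈ K[x_1,...,x_n] divides F = P + λ1·Q1 + ··· + λℓ·Qℓ in (algebraic closure of K(λ))[x_1,...,x_n], then a divides each of P, Q1, ..., Qℓ in K[x_1,...,x_n]; in particular no such nonconstant a exists. -/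
open MvPolynomial

/-- The algebraic closure of the rational function field `K(λ₁,…,λ_l)`. -/
noncomputable abbrev LamClosure (K : Type*) [Field K] (l : ℕ) : Type _ :=
  AlgebraicClosure (FractionRing (MvPolynomial (Fin l) K))

/-- The canonical embedding `K → closure of K(λ₁,…,λ_l)`. -/
noncomputable def lamEmb (K : Type*) [Field K] (l : ℕ) : K →+* LamClosure K l :=
  (algebraMap (FractionRing (MvPolynomial (Fin l) K)) (LamClosure K l)).comp
    ((algebraMap (MvPolynomial (Fin l) K) (FractionRing (MvPolynomial (Fin l) K))).comp
      MvPolynomial.C)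

/-- The indeterminate `λᵢ` viewed in the closure of `K(λ₁,…,λ_l)`. -/
noncomputable def lamVar (K : Type*) [Field K] (l : ℕ) (i : Fin l) : LamClosure K l :=
  algebraMap (FractionRing (MvPolynomial (Fin l) K)) (LamClosure K l)
    (algebraMap (MvPolynomial (Fin l) K) (FractionRing (MvPolynomial (Fin l) K)) (X i))

section Aux

variable {K L : Type*} [Field K] [Field L] [Algebra K L] {n : ℕ}

/-- Apply the `K`-linear functional `T : L →ₗ[K] K` to each coefficient of a
polynomial over `L`, obtaining a polynomial over `K`. -/
noncomputable def liftCoeff (T : L →ₗ[K] K) (p : MvPolynomial (Fin n) L) :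
    MvPolynomial (Fin n) K :=
  ∑ m ∈ p.support, monomial m (T (p.coeff m))

lemma coeff_liftCoeff (T : L →ₗ[K] K) (p : MvPolynomial (Fin n) L) (m : Fin n →₀ ℕ) :
    (liftCoeff T p).coeff m = T (p.coeff m) := by
  classical
  rw [liftCoeff, coeff_sum]
  simp only [coeff_monomial]
  rw [Finset.sum_ite_eq' p.support m (fun m' => T (p.coeff m'))]
  by_cases h : m ∈ p.support
  · rw [if_pos h]
  · rw [if_neg h]
    rw [notMem_support_iff] at h
    rw [h, map_zero]

lemma liftCoeff_map_mul (T : L →ₗ[K] K) (a : MvPolynomial (Fin n) K)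
    (G : MvPolynomial (Fin n) L) :
    liftCoeff T (MvPolynomial.map (algebraMap K L) a * G) = a * liftCoeff T G := by
  ext m
  rw [coeff_liftCoeff, coeff_mul, coeff_mul, map_sum]
  refine Finset.sum_congr rfl fun x _ => ?_
  rw [coeff_liftCoeff, coeff_map, ← Algebra.smul_def, map_smul, smul_eq_mul]

end Aux

/-- A unit in a multivariate polynomial ring over a domain is a constant. -/
lemma isUnit_exists_C {R : Type*} [CommRing R] [IsDomain R] :
    ∀ {n : ℕ} (p : MvPolynomial (Fin n) R), IsUnit p → ∃ c : R, p = MvPolynomial.C c := by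
  intro n
  induction n with
  | zero => exact fun p _ => ⟨p.coeff 0, p.eq_C_of_isEmpty⟩
  | succ n ih =>
    intro p hp
    have h1 : IsUnit ((finSuccEquiv R n) p) := hp.map _
    rw [Polynomial.isUnit_iff] at h1
    obtain ⟨r, hr, hrp⟩ := h1
    obtain ⟨c, rfl⟩ := ih r hr
    refine ⟨c, (finSuccEquiv R n).injective ?_⟩
    rw [← hrp]
    have h2 : (finSuccEquiv R n).symm (Polynomial.C (MvPolynomial.C c)) = MvPolynomial.C c := by
      simpa using congrArg (fun f => f c) (finSuccEquiv_comp_C_eq_C (R := R) n)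
    calc Polynomial.C (MvPolynomial.C c)
        = finSuccEquiv R n ((finSuccEquiv R n).symm (Polynomial.C (MvPolynomial.C c))) :=
          (AlgEquiv.apply_symm_apply _ _).symm
      _ = finSuccEquiv R n (MvPolynomial.C c) := by rw [h2]

/-- No nonconstant polynomial `a ∈ K[x]` divides
`F = P + λ₁Q₁ + ⋯ + λ_l Q_l` over the algebraic closure of `K(λ)` when
`P, Q₁, …, Q_l` are relatively prime nonzero polynomials: such an `a` would
divide each of `P, Q₁, …, Q_l` in `K[x]`, a contradiction. -/
theorem no_constant_field_factor
    {K : Type*} [Field K] [IsAlgClosed K] {n l : ℕ} (hl : 1 ≤ l)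
    (P : MvPolynomial (Fin n) K) (Q : Fin l → MvPolynomial (Fin n) K)
    (hP0 : P ≠ 0) (hQ0 : ∀ i, Q i ≠ 0)
    (hcop : ∀ r : MvPolynomial (Fin n) K, (r ∣ P ∧ ∀ i, r ∣ Q i) → IsUnit r)
    (F : MvPolynomial (Fin n) (LamClosure K l))
    (hF : F = MvPolynomial.map (lamEmb K l) P +
      ∑ i : Fin l, C (lamVar K l i) * MvPolynomial.map (lamEmb K l) (Q i))
    (a : MvPolynomial (Fin n) K) (ha : 0 < a.totalDegree)
    (hdvd : MvPolynomial.map (lamEmb K l) a ∣ F) :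
    (a ∣ P ∧ ∀ i, a ∣ Q i) ∧ False := by
  classical
  set R := MvPolynomial (Fin l) K with hR
  set L := LamClosure K l with hLdef
  -- `lamEmb` is the algebra map
  have hemb : lamEmb K l = algebraMap K L := by
    have h1 : algebraMap K R = MvPolynomial.C := rfl
    rw [lamEmb, ← h1, ← IsScalarTower.algebraMap_eq, ← IsScalarTower.algebraMap_eq]
  have halg : Function.Injective (algebraMap R L) := by
    rw [IsScalarTower.algebraMap_eq R (FractionRing R) L]
    exact (algebraMap (FractionRing R) L).injective.comp (IsFractionRing.injective _ _)
  have hvar : ∀ i, lamVar K l i = algebraMap R L (X i) := fun i => by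
    rw [lamVar, ← IsScalarTower.algebraMap_apply]
  -- the family 1, λ₁, …, λ_l is linearly independent over K
  set w : Option (Fin l) → L := fun o => o.elim 1 (lamVar K l) with hw_def
  have hw : LinearIndependent K w := by
    set g : Option (Fin l) → (Fin l →₀ ℕ) := fun o => o.elim 0 (fun i => Finsupp.single i 1)
      with hg_def
    have hginj : Function.Injective g := by
      intro o o' h
      match o, o' with
      | none, none => rfl
      | none, some i =>
        exfalso
        simp only [hg_def, Option.elim] at h
        exact (fun hc => one_ne_zero (α := ℕ) (Finsupp.single_eq_zero.mp hc)) h.symm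
      | some i, none =>
        exfalso
        simp only [hg_def, Option.elim] at h
        exact (fun hc => one_ne_zero (α := ℕ) (Finsupp.single_eq_zero.mp hc)) h
      | some i, some j =>
        simp only [hg_def, Option.elim] at h
        exact congrArg _ (Finsupp.single_left_injective one_ne_zero h)
    have h1 : LinearIndependent K (fun o : Option (Fin l) => (monomial (g o) (1 : K) : R)) := by
      have := ((basisMonomials (Fin l) K).linearIndependent).comp g hginj
      simpa [coe_basisMonomials, Function.comp_def] using this
    have h2 := h1.map' (IsScalarTower.toAlgHom K R L).toLinearMap
      (LinearMap.ker_eq_bot.mpr halg)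
    have : w = (IsScalarTower.toAlgHom K R L).toLinearMap ∘
        (fun o : Option (Fin l) => (monomial (g o) (1 : K) : R)) := by
      funext o
      match o with
      | none =>
        have h0 : (monomial (0 : Fin l →₀ ℕ) (1 : K) : R) = 1 := by
          rw [monomial_zero']; exact C_1
        simp only [hw_def, Option.elim, Function.comp_apply, hg_def, h0]
        simp
      | some i =>
        have hx : (monomial (Finsupp.single i 1) (1 : K) : R) = X i := rfl
        simp only [hw_def, Option.elim, Function.comp_apply, hg_def, hx, hvar i]
        rfl
    rw [this]
    exact h2
  -- dual functionals
  have hset : LinearIndepOn K id (Set.range w) := (linearIndepOn_id_range_iff hw.injective).mpr hw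
  set B := Module.Basis.extend hset with hB
  have hmem : ∀ j, w j ∈ hset.extend (Set.subset_univ _) :=
    fun j => hset.subset_extend _ ⟨j, rfl⟩
  set T : Option (Fin l) → (L →ₗ[K] K) := fun j => B.coord ⟨w j, hmem j⟩ with hT_def
  have hT : ∀ j j', (T j) (w j') = if j = j' then 1 else 0 := by
    intro j j'
    have h1 : w j' = B ⟨w j', hmem j'⟩ := (Module.Basis.extend_apply_self hset ⟨w j', hmem j'⟩).symm
    rw [hT_def]
    simp only
    rw [h1, Module.Basis.coord_apply, Module.Basis.repr_self, Finsupp.single_apply]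
    by_cases h : j = j'
    · subst h; simp
    · rw [if_neg h, if_neg]
      intro hc
      exact h (hw.injective (congrArg Subtype.val hc)).symm
  -- apply functionals coefficientwise to F
  obtain ⟨G, hG⟩ := hdvd
  have key : ∀ S : L →ₗ[K] K,
      S 1 • P + ∑ i : Fin l, S (lamVar K l i) • Q i = a * liftCoeff S G := by
    intro S
    have hlift : liftCoeff S F = a * liftCoeff S G := by
      rw [hG, hemb, liftCoeff_map_mul]
    rw [← hlift]
    ext m
    rw [coeff_liftCoeff, hF]
    simp only [coeff_add, coeff_sum, coeff_C_mul, coeff_map, map_add, map_sum, coeff_smul,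
      smul_eq_mul, hemb]
    congr 1
    · rw [Algebra.algebraMap_eq_smul_one, map_smul, smul_eq_mul]
      exact mul_comm _ _
    · refine Finset.sum_congr rfl fun i _ => ?_
      rw [mul_comm (lamVar K l i), ← Algebra.smul_def, map_smul, smul_eq_mul]
      exact mul_comm _ _
  -- extract divisibility of P
  have hone : (1 : L) = w none := rfl
  have hvw : ∀ i, lamVar K l i = w (some i) := fun i => rfl
  have haP : a ∣ P := by
    have h := key (T none)
    rw [hone] at h
    simp only [hvw, hT] at h
    simp only [reduceIte, one_smul] at h
    rw [Finset.sum_eq_zero (fun i _ => by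
      rw [if_neg (by simp : (none : Option (Fin l)) ≠ some i), zero_smul]), add_zero] at h
    exact ⟨_, h⟩
  have haQ : ∀ i, a ∣ Q i := by
    intro i
    have h := key (T (some i))
    rw [hone] at h
    simp only [hvw, hT] at h
    rw [if_neg (by simp : (some i : Option (Fin l)) ≠ none), zero_smul, zero_add] at h
    rw [Finset.sum_eq_single i (fun j _ hji => by
        rw [if_neg (fun hc => hji (Option.some_injective _ hc).symm), zero_smul])
      (fun hni => absurd (Finset.mem_univ i) hni)] at h
    rw [if_pos rfl, one_smul] at h
    exact ⟨_, h⟩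
  refine ⟨⟨haP, haQ⟩, ?_⟩
  obtain ⟨c, hc⟩ := isUnit_exists_C a (hcop a ⟨haP, haQ⟩)
  rw [hc, totalDegree_C] at ha
  exact lt_irrefl 0 ha
end

section
/- Let K be an algebraically closed field of characteristic 0, P ∈ K[x_2,...,x_n] a polynomial (not involving x_1) that is not a pure power in K[x_2,...,x_n], and e an integer with 0 < e ≤ deg(P). Then P(x_2,...,x_n) + λ*·x_1^e is irreducible in K[x_1,...,x_n] for all but finitely many values λ* ∈ K, and the number of exceptional values is at most deg(P)^2 − 1. -/
open MvPolynomial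

open Polynomial IntermediateField in
/-- Roots of unity in `F` come from an algebraically closed subfield `K` (char 0). -/
private lemma aux_exists_preimage {K : Type*} [Field K] [IsAlgClosed K] [CharZero K]
    {F : Type*} [Field F] (f : K →+* F) {z : F} {p : ℕ} (hp : p ≠ 0) (hz : z ^ p = 1) :
    ∃ z₀ : K, z₀ ^ p = 1 ∧ f z₀ = z := by
  have hsp : (Polynomial.X ^ p - Polynomial.C (1 : K)).Splits :=
    IsAlgClosed.splits _
  have hmem : z ∈ ((Polynomial.X ^ p - Polynomial.C (1 : K)).map f).roots := by
    rw [Polynomial.mem_roots ((Polynomial.map_monic_ne_zero (monic_X_pow_sub_C _ hp)))]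
    simp [Polynomial.IsRoot, hz]
  rw [Polynomial.Splits.roots_map hsp] at hmem
  obtain ⟨z₀, hz₀, rfl⟩ := Multiset.mem_map.mp hmem
  refine ⟨z₀, ?_, rfl⟩
  have := Polynomial.isRoot_of_mem_roots hz₀
  simpa [sub_eq_zero] using this

open Polynomial IntermediateField in
/-- Kummer-type irreducibility over fields containing an algebraically closed subfield. -/
private lemma aux_X_pow_sub_C_irreducible {K : Type v} [Field K] [IsAlgClosed K] [CharZero K] :
    ∀ e : ℕ, e ≠ 0 → ∀ {F : Type u} [Field F], ∀ (f : K →+* F) (a : F),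
      (∀ p : ℕ, p.Prime → p ∣ e → ∀ b : F, b ^ p ≠ a) →
      Irreducible (Polynomial.X ^ e - Polynomial.C a) := by
  intro e
  induction e using Nat.strong_induction_on with
  | _ e IH =>
  intro he F _ f a ha
  by_cases h1 : e = 1
  · subst h1; simpa using Polynomial.irreducible_X_sub_C a
  obtain ⟨p, hp, hpd⟩ : ∃ p : ℕ, p.Prime ∧ p ∣ e :=
    ⟨e.minFac, Nat.minFac_prime h1, Nat.minFac_dvd e⟩
  obtain ⟨m, hm⟩ : ∃ m, e = m * p := ⟨e / p, (Nat.div_mul_cancel hpd).symm⟩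
  have hm0 : m ≠ 0 := by rintro rfl; simp at hm; exact he hm
  have hmlt : m < e := by
    have h2 := hp.two_le
    have : m * 2 ≤ m * p := Nat.mul_le_mul_left m h2
    omega
  rw [hm]
  apply X_pow_mul_sub_C_irreducible
    (X_pow_sub_C_irreducible_of_prime hp (ha p hp hpd))
  intro E _ _ x hx
  have hne0 : (Polynomial.X ^ p - Polynomial.C a : F[X]) ≠ 0 := (monic_X_pow_sub_C a hp.ne_zero).ne_zero
  have hint : IsIntegral F x := by
    by_contra hni
    exact hne0 (by rw [← hx, minpoly.eq_zero hni])
  haveI : FiniteDimensional F F⟮x⟯ := IntermediateField.adjoin.finiteDimensional hint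
  have hfr : Module.finrank F F⟮x⟯ = p := by
    rw [IntermediateField.adjoin.finrank hint, hx, natDegree_X_pow_sub_C]
  set g := IntermediateField.AdjoinSimple.gen F x with hg
  have hgp : g ^ p = algebraMap F F⟮x⟯ a := by
    have h0 := minpoly.aeval F g
    rw [hg, IntermediateField.minpoly_gen F x, hx] at h0
    simpa [sub_eq_zero] using h0
  have ha0 : a ≠ 0 := by
    intro h
    exact ha p hp hpd 0 (by rw [h, zero_pow hp.ne_zero])
  apply IH m hmlt hm0 ((algebraMap F F⟮x⟯).comp f)
  intro q hq hqm b hb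
  have hnorm : (Algebra.norm F g) ^ p = a ^ p := by
    rw [← map_pow, hgp, Algebra.norm_algebraMap, hfr]
  have hz : (Algebra.norm F g / a) ^ p = 1 := by
    rw [div_pow, hnorm, div_self (pow_ne_zero _ ha0)]
  obtain ⟨z₀, hz₀p, hz₀⟩ := aux_exists_preimage f hp.ne_zero hz
  have hz₀ne : z₀ ≠ 0 := by
    intro h; rw [h, zero_pow hp.ne_zero] at hz₀p; exact zero_ne_one hz₀p
  obtain ⟨w, hw⟩ := IsAlgClosed.exists_pow_nat_eq z₀⁻¹ hq.pos
  have hNg : f z₀ * a = Algebra.norm F g := by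
    rw [eq_div_iff ha0] at hz₀
    exact hz₀
  apply ha q hq (dvd_trans hqm ⟨p, hm⟩) (f w * Algebra.norm F b)
  have hfz : f z₀ ≠ 0 := by
    simpa using (map_ne_zero f).mpr hz₀ne
  calc (f w * Algebra.norm F b) ^ q
      = f (w ^ q) * (Algebra.norm F b) ^ q := by rw [mul_pow, map_pow]
    _ = (f z₀)⁻¹ * Algebra.norm F (b ^ q) := by rw [hw, map_inv₀, map_pow]
    _ = (f z₀)⁻¹ * (f z₀ * a) := by rw [hb, hNg]
    _ = a := by field_simp

set_option synthInstance.maxHeartbeats 1000000 in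
set_option maxHeartbeats 1000000 in
open Polynomial in
/-- Key lemma: irreducibility of `C (C t) * X ^ e + C q` over `MvPolynomial (Fin m) K`. -/
private lemma aux_key {K : Type*} [Field K] [IsAlgClosed K] [CharZero K] {m : ℕ}
    (t : K) (ht : t ≠ 0) (q : MvPolynomial (Fin m) K) (e : ℕ) (he : e ≠ 0)
    (hq : ∀ p : ℕ, p.Prime → p ∣ e → ∀ (c : K) (B : MvPolynomial (Fin m) K),
      q ≠ MvPolynomial.C c * B ^ p) :
    Irreducible (Polynomial.C (MvPolynomial.C t) * Polynomial.X ^ e + Polynomial.C q) := by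
  letI : NormalizationMonoid (MvPolynomial (Fin m) K) :=
    UniqueFactorizationMonoid.normalizationMonoid.toNormalizationMonoid
  letI := UniqueFactorizationMonoid.toNormalizedGCDMonoid (MvPolynomial (Fin m) K)
  haveI : IsIntegrallyClosed (MvPolynomial (Fin m) K) := GCDMonoid.toIsIntegrallyClosed
  have htu : (MvPolynomial.C t : MvPolynomial (Fin m) K) * MvPolynomial.C t⁻¹ = 1 := by
    rw [← map_mul, mul_inv_cancel₀ ht, map_one]
  set r : MvPolynomial (Fin m) K := -(MvPolynomial.C t⁻¹ * q) with hr
  have hCtr : (MvPolynomial.C t : MvPolynomial (Fin m) K) * r = -q := by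
    rw [hr, mul_neg, ← mul_assoc, htu, one_mul]
  have hfact : Polynomial.C (MvPolynomial.C t : MvPolynomial (Fin m) K)
        * (Polynomial.X ^ e - Polynomial.C r)
      = Polynomial.C (MvPolynomial.C t) * Polynomial.X ^ e + Polynomial.C q := by
    rw [mul_sub, ← Polynomial.C_mul, hCtr, map_neg, sub_neg_eq_add]
  rw [← hfact]
  have hu : IsUnit (Polynomial.C (MvPolynomial.C t : MvPolynomial (Fin m) K)) :=
    ((isUnit_iff_ne_zero.mpr ht).map (MvPolynomial.C : K →+* MvPolynomial (Fin m) K)).map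
      Polynomial.C
  rw [irreducible_isUnit_mul hu]
  have hM : (Polynomial.X ^ e - Polynomial.C r : (MvPolynomial (Fin m) K)[X]).Monic :=
    monic_X_pow_sub_C r he
  rw [hM.irreducible_iff_irreducible_map_fraction_map (K := FractionRing (MvPolynomial (Fin m) K))]
  rw [Polynomial.map_sub, Polynomial.map_pow, Polynomial.map_X, Polynomial.map_C]
  apply aux_X_pow_sub_C_irreducible e he
    ((algebraMap (MvPolynomial (Fin m) K) (FractionRing (MvPolynomial (Fin m) K))).comp
      MvPolynomial.C)
  intro p hp hpe b hb
  have hint : IsIntegral (MvPolynomial (Fin m) K) b :=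
    ⟨Polynomial.X ^ p - Polynomial.C r, monic_X_pow_sub_C r hp.ne_zero, by
      simp [Polynomial.eval₂_sub, hb]⟩
  obtain ⟨B, hB⟩ := IsIntegrallyClosed.isIntegral_iff.mp hint
  have hBp : B ^ p = r := by
    apply IsFractionRing.injective (MvPolynomial (Fin m) K)
      (FractionRing (MvPolynomial (Fin m) K))
    rw [map_pow, hB, hb]
  apply hq p hp hpe (-t) B
  have : MvPolynomial.C (-t) * B ^ p = q := by
    rw [hBp, hr, map_neg, neg_mul, mul_neg, neg_neg, ← mul_assoc, htu, one_mul]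
  exact this.symm

private lemma aux_eq_C_of_totalDegree_eq_zero {K : Type*} [CommSemiring K] {σ : Type*}
    {q : MvPolynomial σ K} (h : q.totalDegree = 0) : ∃ c, q = MvPolynomial.C c := by
  classical
  refine ⟨q.coeff 0, ?_⟩
  ext mo
  by_cases hmo : mo = 0
  · simp [hmo]
  · rw [MvPolynomial.coeff_C, if_neg (Ne.symm hmo)]
    by_contra hc
    have hsup : mo ∈ q.support := by simpa [MvPolynomial.mem_support_iff] using hc
    have := (MvPolynomial.totalDegree_eq_zero_iff σ q).mp h mo hsup
    exact hmo (Finsupp.ext this)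

/-- If `P ∈ K[x₂,…,xₙ]` is not a pure power and `0 < e ≤ deg P`,
then `P + λ* x₁^e` is irreducible in `K[x₁,…,xₙ]` for all but at most
`deg(P)² − 1` values `λ* ∈ K`. -/
theorem irreducible_plus_power_of_first_variable
    {K : Type*} [Field K] [IsAlgClosed K] [CharZero K] {n : ℕ} (hn : 2 ≤ n)
    (P : MvPolynomial (Fin n) K)
    (hx1 : ∀ m ∈ P.support, m ⟨0, by omega⟩ = 0)
    (hpp : ¬ ∃ (S : MvPolynomial (Fin n) K) (k : ℕ), 1 < k ∧ P = S ^ k)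
    (e : ℕ) (he : 0 < e) (he' : e ≤ P.totalDegree) :
    ∃ s : Finset K, s.card ≤ P.totalDegree ^ 2 - 1 ∧
      ∀ t : K, t ∉ s → Irreducible (P + C t * X (⟨0, by omega⟩ : Fin n) ^ e) := by
  obtain ⟨m, rfl⟩ : ∃ m, n = m + 1 := ⟨n - 1, by omega⟩
  have h0 : (⟨0, by omega⟩ : Fin (m + 1)) = 0 := by ext; simp
  rw [h0] at hx1 ⊢
  have hP0 : P ≠ 0 := by
    rintro rfl
    exact hpp ⟨0, 2, one_lt_two, by simp⟩
  set φ := finSuccEquiv K m with hφ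
  -- P does not involve variable 0:
  have hd0 : degreeOf 0 P = 0 := by
    rw [degreeOf_eq_sup]
    exact Nat.le_zero.mp (Finset.sup_le fun mo hmo => le_of_eq (hx1 mo hmo))
  have hnd : (φ P).natDegree = 0 := by rw [natDegree_finSuccEquiv]; exact hd0
  set Q := (φ P).coeff 0 with hQdef
  have hQ : φ P = Polynomial.C Q := Polynomial.eq_C_of_natDegree_eq_zero hnd
  have hPQ : P = φ.symm (Polynomial.C Q) := by
    rw [← hQ, AlgEquiv.symm_apply_apply]
  -- the main argument for t ≠ 0
  have hmain : ∀ t : K, t ≠ 0 → Irreducible (P + C t * X (0 : Fin (m + 1)) ^ e) := by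
    intro t ht
    apply (MulEquiv.irreducible_iff φ).mp
    have himg : φ (P + C t * X (0 : Fin (m + 1)) ^ e)
        = Polynomial.C (MvPolynomial.C t) * Polynomial.X ^ e + Polynomial.C Q := by
      have hCt : φ (C t) = Polynomial.C (MvPolynomial.C t) := by
        simp [hφ, finSuccEquiv_apply]
      rw [map_add, map_mul, map_pow, hQ, hCt, finSuccEquiv_X_zero]
      ring
    rw [himg]
    apply aux_key t ht Q e he.ne'
    intro p hp hpe c B hQeq
    apply hpp
    obtain ⟨c₀, hc₀⟩ := IsAlgClosed.exists_pow_nat_eq c hp.pos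
    refine ⟨φ.symm (Polynomial.C (MvPolynomial.C c₀ * B)), p, hp.one_lt, ?_⟩
    rw [hPQ, hQeq, ← hc₀,
      map_pow (MvPolynomial.C : K →+* MvPolynomial (Fin m) K), ← mul_pow,
      map_pow (Polynomial.C : MvPolynomial (Fin m) K →+* Polynomial (MvPolynomial (Fin m) K)),
      map_pow φ.symm]
  -- the totalDegree of P is positive
  have hdpos : 1 ≤ P.totalDegree := le_trans he he'
  by_cases hd1 : P.totalDegree = 1
  · -- degree one: no exceptional values
    refine ⟨∅, by simp, ?_⟩
    intro t _
    by_cases ht : t = 0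
    · subst ht
      rw [map_zero, zero_mul, add_zero]
      -- P itself is irreducible: linear polynomial
      -- find a variable j with degreeOf j P = 1
      have hsupp : P.support.Nonempty := by
        rw [Finset.nonempty_iff_ne_empty, ne_eq, MvPolynomial.support_eq_empty]
        exact hP0
      obtain ⟨mo, hmo, hmos⟩ := Finset.exists_mem_eq_sup P.support hsupp
        (fun s => Finsupp.sum s fun _ e => e)
      rw [← MvPolynomial.totalDegree, hd1] at hmos
      obtain ⟨j, hj⟩ : ∃ j, mo j ≠ 0 := by
        by_contra hc
        push_neg at hc
        have : mo = 0 := Finsupp.ext hc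
        rw [this] at hmos
        simp [Finsupp.sum] at hmos
      have hj1 : degreeOf j P = 1 := by
        have hle : degreeOf j P ≤ 1 := (MvPolynomial.degreeOf_le_totalDegree P j).trans hd1.le
        have hge : 1 ≤ degreeOf j P := by
          rw [degreeOf_eq_sup]
          have hmoj : mo j ≤ P.support.sup fun m' => m' j :=
            Finset.le_sup (f := fun m' => m' j) hmo
          omega
        omega
      set σs := Equiv.swap (0 : Fin (m + 1)) j with hσs
      set P' := rename σs P with hP'
      apply (MulEquiv.irreducible_iff (renameEquiv K σs)).mp
      show Irreducible P'
      apply (MulEquiv.irreducible_iff φ).mp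
      have htd' : P'.totalDegree = 1 := by
        have h1 : P'.totalDegree ≤ 1 := (MvPolynomial.totalDegree_rename_le σs P).trans hd1.le
        have h2 : P.totalDegree ≤ P'.totalDegree := by
          have := MvPolynomial.totalDegree_rename_le σs.symm P'
          rwa [hP', MvPolynomial.rename_rename, show (⇑σs.symm ∘ ⇑σs) = id by
            ext z; simp, MvPolynomial.rename_id] at this
        omega
      have hδ : degreeOf 0 P' = 1 := by
        have : degreeOf (σs j) (rename σs P) = degreeOf j P :=
          MvPolynomial.degreeOf_rename_of_injective σs.injective j
        rwa [hσs, Equiv.swap_apply_right, hj1, ← hσs, ← hP'] at this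
      have hW : (φ P').natDegree = 1 := by rw [natDegree_finSuccEquiv]; exact hδ
      have hP'0 : P' ≠ 0 := by
        intro h
        exact hP0 (by
          have := congrArg (rename σs.symm) h
          rwa [hP', MvPolynomial.rename_rename, show (⇑σs.symm ∘ ⇑σs) = id by
            ext z; simp, MvPolynomial.rename_id, map_zero] at this)
      have hφP'0 : φ P' ≠ 0 := by
        simpa using (map_ne_zero_iff φ φ.injective).mpr hP'0
      have hWdeg : (φ P').degree ≤ 1 := by
        have h := Polynomial.degree_le_natDegree (p := φ P')
        rw [hW] at h
        exact_mod_cast h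
      have hb1 : (φ P').coeff 1 ≠ 0 := by
        have := Polynomial.leadingCoeff_ne_zero.mpr hφP'0
        rwa [Polynomial.leadingCoeff, hW] at this
      have hb1td : ((φ P').coeff 1).totalDegree = 0 := by
        have h := totalDegree_coeff_finSuccEquiv_add_le P' 1 (by rw [← hφ] at *; exact hb1)
        rw [← hφ, htd'] at h
        omega
      obtain ⟨c, hc⟩ := aux_eq_C_of_totalDegree_eq_zero hb1td
      have hcne : c ≠ 0 := by
        intro h; rw [h, map_zero] at hc; exact hb1 hc
      rw [Polynomial.eq_X_add_C_of_degree_le_one hWdeg, hc]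
      have := aux_key c hcne ((φ P').coeff 0) 1 one_ne_zero
        (fun p hp hp1 => absurd (Nat.le_of_dvd one_pos hp1) (by
          have := hp.two_le
          omega))
      rwa [pow_one] at this
    · exact hmain t ht
  · -- degree at least two: exceptional set {0}
    refine ⟨{0}, ?_, ?_⟩
    · have h2 : 2 ≤ P.totalDegree := by omega
      have : 2 * 2 ≤ P.totalDegree * P.totalDegree := Nat.mul_le_mul h2 h2
      rw [Finset.card_singleton, pow_two]
      omega
    · intro t ht
      exact hmain t (by simpa using ht)
end

section
/- Let K be an algebraically closed field, λ an indeterminate, and φ, ψ ∈ K[x_1,...,x_n] relatively prime polynomials. If φ(x) + μ(λ)·ψ(x) is reducible in (algebraic closure of K(λ))[x_1,...,x_n] for some μ(λ) in the algebraic closure of K(λ), and φ + λ·ψ is irreducible in (algebraic closure of K(λ))[x_1,...,x_n], then μ(λ) is a constant, i.e., μ(λ) ∈ K. -/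
open MvPolynomial

section Aux

variable {K : Type*} [Field K]

/-- Exchange lemma for single transcendental elements. -/
private theorem exch_aux12 {K F : Type*} [Field K] [Field F] [Algebra K F] {a b : F}
    (ha : Transcendental K a) (hb : Transcendental K b)
    (h : IsAlgebraic (Algebra.adjoin K (Set.range (fun _ : Unit => a))) b) :
    IsAlgebraic (Algebra.adjoin K (Set.range (fun _ : Unit => b))) a := by
  by_contra htr
  have hbi : AlgebraicIndependent K (fun _ : Unit => b) :=
    algebraicIndependent_unique_type_iff.2 hb
  have hai : AlgebraicIndependent K (fun _ : Unit => a) :=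
    algebraicIndependent_unique_type_iff.2 ha
  have h2 : AlgebraicIndependent K (fun o : Option Unit => o.elim a (fun _ => b)) :=
    (hbi.option_iff_transcendental a).2 htr
  have h3 : AlgebraicIndependent K (fun o : Option Unit => o.elim b (fun _ => a)) := by
    have := h2.comp (fun o : Option Unit => o.elim (some ()) (fun _ => none))
      (by intro x y hxy; cases x <;> cases y <;> simp_all)
    convert this using 1
    funext o
    cases o <;> rfl
  exact (hai.option_iff_transcendental b).1 h3 h

/-- If `t, μ` are transcendental over `K`, `μ` is algebraic over `K[t]`, and `F` is
algebraic over `K(t)` and algebraically closed, then there is an automorphism of `F`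
fixing `K` and sending `t` to `μ`. -/
private theorem exists_aut_aux12 {K F : Type*} [Field K] [Field F] [Algebra K F]
    [IsAlgClosed F] {t μ : F}
    (ht : Transcendental K t) (hμ : Transcendental K μ)
    (h1 : IsAlgebraic (Algebra.adjoin K (Set.range (fun _ : Unit => t))) μ)
    (hFt : Algebra.IsAlgebraic
      (↥(IntermediateField.adjoin K (Set.range (fun _ : Unit => t)))) F) :
    ∃ σ : F ≃+* F, (∀ c : K, σ (algebraMap K F c) = algebraMap K F c) ∧ σ t = μ := by
  have h2 : IsAlgebraic (Algebra.adjoin K (Set.range (fun _ : Unit => μ))) t :=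
    exch_aux12 ht hμ h1
  have hμi : AlgebraicIndependent K (fun _ : Unit => μ) :=
    algebraicIndependent_unique_type_iff.2 hμ
  have hti : AlgebraicIndependent K (fun _ : Unit => t) :=
    algebraicIndependent_unique_type_iff.2 ht
  set M := IntermediateField.adjoin K (Set.range (fun _ : Unit => μ)) with hM
  set T := IntermediateField.adjoin K (Set.range (fun _ : Unit => t)) with hT
  have hMt : IsAlgebraic (↥M) t :=
    h2.tower_top_of_subalgebra_le (IntermediateField.algebra_adjoin_le_adjoin K _)
  have hMtInt : IsIntegral (↥M) t := hMt.isIntegral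
  set N := IntermediateField.adjoin (↥M) ({t} : Set F) with hN
  haveI I1 : Algebra.IsAlgebraic (↥M) (↥N) :=
    IntermediateField.isAlgebraic_adjoin_simple hMtInt
  have htN : t ∈ N := IntermediateField.subset_adjoin _ _ rfl
  have hTN : ∀ x : ↥T, (x : F) ∈ N := by
    intro x
    have hx : (x : F) ∈ T := x.2
    have hle : T ≤ N.restrictScalars K := by
      rw [hT]
      apply IntermediateField.adjoin_le_iff.2
      rintro y ⟨_, rfl⟩
      exact htN
    exact hle hx
  haveI I2 : Algebra.IsAlgebraic (↥N) F := by
    constructor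
    intro y
    have hy : IsAlgebraic (↥T) y := Algebra.IsAlgebraic.isAlgebraic y
    let u : ↥T →+* ↥N := RingHom.codRestrict ((IntermediateField.val T) : ↥T →+* F) _ hTN
    have huinj : Function.Injective u := fun a b h => by
      have h2 := congrArg Subtype.val h
      exact Subtype.ext h2
    exact hy.ringHom_of_comp_eq u (RingHom.id F) huinj (by ext r; rfl)
  haveI IMF : Algebra.IsAlgebraic (↥M) F := Algebra.IsAlgebraic.trans (↥M) (↥N) F
  haveI : IsAlgClosure (↥T) F := ⟨inferInstance, hFt⟩
  haveI : IsAlgClosure (↥M) F := ⟨inferInstance, IMF⟩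
  let e0 := (hti.aevalEquivField.symm.trans hμi.aevalEquivField)
  let e : ↥T ≃+* ↥M := e0.toRingEquiv
  let σ : F ≃+* F := IsAlgClosure.equivOfEquiv F F e
  have hσ : ∀ x : ↥T, σ (algebraMap (↥T) F x) = algebraMap (↥M) F (e x) :=
    fun x => IsAlgClosure.equivOfEquiv_algebraMap F F e x
  refine ⟨σ, ?_, ?_⟩
  · intro c
    have h1' : algebraMap K F c = algebraMap (↥T) F (algebraMap K (↥T) c) :=
      (IsScalarTower.algebraMap_apply K (↥T) F c)
    rw [h1', hσ, show e (algebraMap K (↥T) c) = algebraMap K (↥M) c from e0.commutes c,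
      ← IsScalarTower.algebraMap_apply]
    exact h1'
  · have htT : t ∈ T := IntermediateField.subset_adjoin _ _ ⟨(), rfl⟩
    have hkey : (⟨t, htT⟩ : ↥T) =
        hti.aevalEquivField (algebraMap (MvPolynomial Unit K) _ (MvPolynomial.X ())) := by
      apply Subtype.ext
      rw [hti.aevalEquivField_algebraMap_apply_coe]
      simp
    have h1' : t = algebraMap (↥T) F (⟨t, htT⟩ : ↥T) := rfl
    rw [h1', hσ]
    have : e (⟨t, htT⟩ : ↥T) =
        hμi.aevalEquivField (algebraMap (MvPolynomial Unit K) _ (MvPolynomial.X ())) := by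
      rw [hkey]
      show e0 (hti.aevalEquivField _) = _
      simp [e0]
    rw [this]
    have := hμi.aevalEquivField_algebraMap_apply_coe (MvPolynomial.X ())
    simp only [MvPolynomial.aeval_X] at this
    exact this

private theorem t_transcendental_aux12 :
    Transcendental K (algebraMap (RatFunc K) (AlgebraicClosure (RatFunc K)) RatFunc.X) := by
  have h0 : Transcendental K (Polynomial.X : Polynomial K) := Polynomial.transcendental_X K
  have h1 : Transcendental K (RatFunc.X : RatFunc K) := by
    have := h0.ringHom_of_comp_eq (RingHom.id K) (algebraMap (Polynomial K) (RatFunc K))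
      Function.surjective_id (IsFractionRing.injective (Polynomial K) (RatFunc K))
      (by ext a; simp [← IsScalarTower.algebraMap_apply])
    rwa [RatFunc.algebraMap_X] at this
  exact h1.ringHom_of_comp_eq (RingHom.id K)
    (algebraMap (RatFunc K) (AlgebraicClosure (RatFunc K)))
    Function.surjective_id (algebraMap (RatFunc K) (AlgebraicClosure (RatFunc K))).injective
    (by ext a; simp [← IsScalarTower.algebraMap_apply, ← RatFunc.algebraMap_eq_C])

private theorem aeval_t_eq_aux12 :
    ((Polynomial.aeval (algebraMap (RatFunc K) (AlgebraicClosure (RatFunc K)) RatFunc.X) :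
        Polynomial K →ₐ[K] AlgebraicClosure (RatFunc K)) : Polynomial K →+* _) =
      algebraMap (Polynomial K) (AlgebraicClosure (RatFunc K)) := by
  apply Polynomial.ringHom_ext
  · intro a
    rw [AlgHom.coe_toRingHom, Polynomial.aeval_C,
      IsScalarTower.algebraMap_apply K (Polynomial K) (AlgebraicClosure (RatFunc K)),
      Polynomial.algebraMap_eq]
  · rw [AlgHom.coe_toRingHom, Polynomial.aeval_X,
      IsScalarTower.algebraMap_apply (Polynomial K) (RatFunc K) (AlgebraicClosure (RatFunc K)),
      RatFunc.algebraMap_X]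

private theorem mu_alg_over_adjoin_t_aux12 (μ : AlgebraicClosure (RatFunc K)) :
    IsAlgebraic (Algebra.adjoin K
      (Set.range (fun _ : Unit => algebraMap (RatFunc K) (AlgebraicClosure (RatFunc K)) RatFunc.X)))
      μ := by
  have hmu : IsAlgebraic (Polynomial K) μ :=
    (IsFractionRing.isAlgebraic_iff (Polynomial K) (RatFunc K) (AlgebraicClosure (RatFunc K))).2
      (Algebra.IsAlgebraic.isAlgebraic μ)
  have ht : Transcendental K (algebraMap (RatFunc K) (AlgebraicClosure (RatFunc K)) RatFunc.X) :=
    t_transcendental_aux12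
  have hinj : Function.Injective (Polynomial.aeval
      (algebraMap (RatFunc K) (AlgebraicClosure (RatFunc K)) RatFunc.X) :
      Polynomial K →ₐ[K] AlgebraicClosure (RatFunc K)) :=
    transcendental_iff_injective.mp ht
  have hmem : ∀ p : Polynomial K, Polynomial.aeval
      (algebraMap (RatFunc K) (AlgebraicClosure (RatFunc K)) RatFunc.X) p ∈
      Algebra.adjoin K (Set.range (fun _ : Unit =>
        algebraMap (RatFunc K) (AlgebraicClosure (RatFunc K)) RatFunc.X)) := by
    intro p
    rw [Set.range_const, Algebra.adjoin_singleton_eq_range_aeval]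
    exact ⟨p, rfl⟩
  let g0 := AlgHom.codRestrict (Polynomial.aeval
      (algebraMap (RatFunc K) (AlgebraicClosure (RatFunc K)) RatFunc.X) :
      Polynomial K →ₐ[K] AlgebraicClosure (RatFunc K)) _ hmem
  have hg0inj : Function.Injective g0 := fun p q hpq => hinj (congrArg Subtype.val hpq)
  have key : (algebraMap (Algebra.adjoin K (Set.range (fun _ : Unit =>
        algebraMap (RatFunc K) (AlgebraicClosure (RatFunc K)) RatFunc.X)))
        (AlgebraicClosure (RatFunc K))).comp
      (g0 : Polynomial K →+* _) = (RingHom.id (AlgebraicClosure (RatFunc K))).comp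
        (algebraMap (Polynomial K) (AlgebraicClosure (RatFunc K))) := by
    rw [RingHom.id_comp, ← aeval_t_eq_aux12]
    rfl
  simpa using hmu.ringHom_of_comp_eq (g0 : Polynomial K →+* _)
    (RingHom.id (AlgebraicClosure (RatFunc K))) hg0inj key

private theorem F_alg_over_T_aux12 :
    Algebra.IsAlgebraic
      (↥(IntermediateField.adjoin K (Set.range fun _ : Unit =>
        algebraMap (RatFunc K) (AlgebraicClosure (RatFunc K)) RatFunc.X)))
      (AlgebraicClosure (RatFunc K)) := by
  constructor
  intro y
  have hy : IsAlgebraic (RatFunc K) y := Algebra.IsAlgebraic.isAlgebraic y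
  have htmem : algebraMap (RatFunc K) (AlgebraicClosure (RatFunc K)) RatFunc.X ∈
      IntermediateField.adjoin K (Set.range fun _ : Unit =>
        algebraMap (RatFunc K) (AlgebraicClosure (RatFunc K)) RatFunc.X) :=
    IntermediateField.subset_adjoin _ _ ⟨(), rfl⟩
  have hpoly : ∀ p : Polynomial K, algebraMap (Polynomial K) (AlgebraicClosure (RatFunc K)) p ∈
      IntermediateField.adjoin K (Set.range fun _ : Unit =>
        algebraMap (RatFunc K) (AlgebraicClosure (RatFunc K)) RatFunc.X) := by
    intro p
    rw [← aeval_t_eq_aux12]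
    have hadj : Algebra.adjoin K
        ({algebraMap (RatFunc K) (AlgebraicClosure (RatFunc K)) RatFunc.X} : Set _) ≤
        (IntermediateField.adjoin K (Set.range fun _ : Unit =>
          algebraMap (RatFunc K) (AlgebraicClosure (RatFunc K)) RatFunc.X)).toSubalgebra := by
      apply Algebra.adjoin_le
      rintro x rfl
      exact htmem
    apply hadj
    rw [Algebra.adjoin_singleton_eq_range_aeval]
    exact ⟨p, rfl⟩
  have hrange : ∀ r : RatFunc K, algebraMap (RatFunc K) (AlgebraicClosure (RatFunc K)) r ∈
      IntermediateField.adjoin K (Set.range fun _ : Unit =>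
        algebraMap (RatFunc K) (AlgebraicClosure (RatFunc K)) RatFunc.X) := by
    intro r
    induction r using RatFunc.induction_on with
    | f p q hq =>
      rw [map_div₀, ← IsScalarTower.algebraMap_apply, ← IsScalarTower.algebraMap_apply]
      exact div_mem (hpoly p) (hpoly q)
  let u : RatFunc K →+* ↥(IntermediateField.adjoin K (Set.range fun _ : Unit =>
      algebraMap (RatFunc K) (AlgebraicClosure (RatFunc K)) RatFunc.X)) :=
    RingHom.codRestrict (algebraMap (RatFunc K) (AlgebraicClosure (RatFunc K))) _ hrange
  have huinj : Function.Injective u := fun a b h =>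
    (algebraMap (RatFunc K) (AlgebraicClosure (RatFunc K))).injective (congrArg Subtype.val h)
  exact hy.ringHom_of_comp_eq u (RingHom.id _) huinj (by ext r; rfl)

end Aux

/-- If `φ + λψ` is irreducible over the algebraic closure of
`K(λ)` but `φ + μψ` is reducible for some `μ` in that closure, then `μ` lies
in `K`. -/
theorem mu_is_constant_of_reducible
    {K : Type*} [Field K] [IsAlgClosed K] {n : ℕ}
    (φ ψ : MvPolynomial (Fin n) K) (hcop : IsRelPrime φ ψ)
    (μ : AlgebraicClosure (RatFunc K))
    (hred : ¬ Irreducible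
      (MvPolynomial.map
          ((algebraMap (RatFunc K) (AlgebraicClosure (RatFunc K))).comp
            (algebraMap K (RatFunc K))) φ +
        C μ *
          MvPolynomial.map
            ((algebraMap (RatFunc K) (AlgebraicClosure (RatFunc K))).comp
              (algebraMap K (RatFunc K))) ψ))
    (hirr : Irreducible
      (MvPolynomial.map
          ((algebraMap (RatFunc K) (AlgebraicClosure (RatFunc K))).comp
            (algebraMap K (RatFunc K))) φ +
        C (algebraMap (RatFunc K) (AlgebraicClosure (RatFunc K)) RatFunc.X) *
          MvPolynomial.map
            ((algebraMap (RatFunc K) (AlgebraicClosure (RatFunc K))).comp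
              (algebraMap K (RatFunc K))) ψ)) :
    ∃ c : K,
      μ = (algebraMap (RatFunc K) (AlgebraicClosure (RatFunc K)))
        (algebraMap K (RatFunc K) c) := by
  by_cases halg : IsAlgebraic K μ
  · -- `μ` is algebraic over the algebraically closed field `K`, hence lies in `K`.
    have hint : IsIntegral K μ := halg.isIntegral
    have hirr' := minpoly.irreducible hint
    have hdeg : (minpoly K μ).degree = 1 :=
      IsAlgClosed.degree_eq_one_of_irreducible K hirr'
    have hm := (minpoly.monic hint)
    have hp : minpoly K μ = Polynomial.X - Polynomial.C (-(minpoly K μ).coeff 0) := by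
      simpa [hm.leadingCoeff] using Polynomial.eq_X_add_C_of_degree_eq_one hdeg
    have h0 := minpoly.aeval K μ
    rw [hp] at h0
    simp only [map_sub, map_add, Polynomial.aeval_X, Polynomial.aeval_C, map_neg,
      sub_neg_eq_add] at h0
    refine ⟨-(minpoly K μ).coeff 0, ?_⟩
    rw [← IsScalarTower.algebraMap_apply K (RatFunc K) (AlgebraicClosure (RatFunc K))]
    rw [map_neg]
    linear_combination h0
  · exfalso
    have hμ : Transcendental K μ := halg
    obtain ⟨σ, hσK, hσt⟩ := exists_aut_aux12 t_transcendental_aux12 hμ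
      (mu_alg_over_adjoin_t_aux12 μ) F_alg_over_T_aux12
    have hσr : (σ : AlgebraicClosure (RatFunc K) →+* AlgebraicClosure (RatFunc K)).comp
        ((algebraMap (RatFunc K) (AlgebraicClosure (RatFunc K))).comp
          (algebraMap K (RatFunc K))) =
        (algebraMap (RatFunc K) (AlgebraicClosure (RatFunc K))).comp
          (algebraMap K (RatFunc K)) := by
      ext c
      have : (algebraMap (RatFunc K) (AlgebraicClosure (RatFunc K)))
          ((algebraMap K (RatFunc K)) c) = algebraMap K (AlgebraicClosure (RatFunc K)) c :=
        (IsScalarTower.algebraMap_apply K (RatFunc K) (AlgebraicClosure (RatFunc K)) c).symm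
      simp only [RingHom.comp_apply, this]
      exact hσK c
    apply hred
    have hmap : (MvPolynomial.mapEquiv (Fin n) σ)
        (MvPolynomial.map
          ((algebraMap (RatFunc K) (AlgebraicClosure (RatFunc K))).comp
            (algebraMap K (RatFunc K))) φ +
          C (algebraMap (RatFunc K) (AlgebraicClosure (RatFunc K)) RatFunc.X) *
            MvPolynomial.map
              ((algebraMap (RatFunc K) (AlgebraicClosure (RatFunc K))).comp
                (algebraMap K (RatFunc K))) ψ) =
        MvPolynomial.map
          ((algebraMap (RatFunc K) (AlgebraicClosure (RatFunc K))).comp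
            (algebraMap K (RatFunc K))) φ +
          C μ *
            MvPolynomial.map
              ((algebraMap (RatFunc K) (AlgebraicClosure (RatFunc K))).comp
                (algebraMap K (RatFunc K))) ψ := by
      rw [mapEquiv_apply, map_add, map_mul, MvPolynomial.map_map, hσr, MvPolynomial.map_C,
        MvPolynomial.map_map, hσr,
        show ((σ : AlgebraicClosure (RatFunc K) →+* AlgebraicClosure (RatFunc K))
          ((algebraMap (RatFunc K) (AlgebraicClosure (RatFunc K))) RatFunc.X)) = μ from hσt]
    rw [← hmap]
    exact (MulEquiv.irreducible_iff (MvPolynomial.mapEquiv (Fin n) σ)).2 hirr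
end

section
/- Let K be an algebraically closed field of characteristic p > 0. If φ_0, ψ_0 ∈ K[x] and φ_0 + λ·ψ_0 = φ_1^p + λ·ψ_1^p for some φ_1, ψ_1 ∈ K[x], and F ∈ K[x, λ_1,...,λ_ℓ] is (φ_0, ψ_0)-homogeneously composed in degree d_0, then F is (φ_1, ψ_1)-homogeneously composed in degree d_0·p. -/
open MvPolynomial

/-- In characteristic `p > 0`, if `φ₀ + λψ₀ = φ₁^p + λψ₁^p` and
`F` is `(φ₀, ψ₀)`-homogeneously composed in degree `d₀`, then `F` is
`(φ₁, ψ₁)`-homogeneously composed in degree `d₀ · p`. -/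
theorem composed_refinement_char_p
    {K : Type*} [Field K] [IsAlgClosed K] (p : ℕ) [hp : Fact p.Prime]
    [CharP K p] {n l : ℕ}
    (φ₀ ψ₀ φ₁ ψ₁ : MvPolynomial (Fin n) K)
    (hfrob : Polynomial.C φ₀ + Polynomial.X * Polynomial.C ψ₀ =
      Polynomial.C (φ₁ ^ p) + Polynomial.X * Polynomial.C (ψ₁ ^ p))
    (F : MvPolynomial (Fin n) (LamClosure K l)) (d₀ : ℕ)
    (hcomp : ∃ H : MvPolynomial (Fin 2) (LamClosure K l), H.IsHomogeneous d₀ ∧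
      F = MvPolynomial.aeval
        ![MvPolynomial.map (lamEmb K l) φ₀, MvPolynomial.map (lamEmb K l) ψ₀] H) :
    ∃ H' : MvPolynomial (Fin 2) (LamClosure K l), H'.IsHomogeneous (d₀ * p) ∧
      F = MvPolynomial.aeval
        ![MvPolynomial.map (lamEmb K l) φ₁, MvPolynomial.map (lamEmb K l) ψ₁] H' := by
  obtain ⟨H, hH, hF⟩ := hcomp
  have h0 : φ₀ = φ₁ ^ p := by
    have := congrArg (fun q => Polynomial.coeff q 0) hfrob
    simpa [-map_pow] using this
  have h1 : ψ₀ = ψ₁ ^ p := by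
    have := congrArg (fun q => Polynomial.coeff q 1) hfrob
    simpa [-map_pow] using this
  refine ⟨aeval (fun i => X i ^ p) H, ?_, ?_⟩
  · rw [mul_comm]
    exact hH.aeval _ fun i => isHomogeneous_X_pow _ _
  · rw [hF, h0, h1]
    rw [← AlgHom.comp_apply, comp_aeval]
    congr 1
    apply MvPolynomial.algHom_ext
    intro i
    fin_cases i <;> simp [map_pow]
end
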